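/- Suppose cluster C_k = B_k ∪ U_k satisfies capacity(k) ≤ (1+ε)·usage(k) for some ε > 0, and let c_k = max_{i∈B_k} (Σ_{j∈U} w_{i,j}) / (Σ_{j∈U_k} w_{i,j}) (so −c_k is the minimum preference of U_k among its base stations). Then w̄(C_k)/w(C_k) = (capacity(k)+usage(k))/w(C_k) − 2 and usage(k)/w(C_k) ≤ c_k, and consequently w̄(C_k)/w(C_k) ≤ (2+ε)·c_k − 2. -/
import Mathlib


open Finset

def capacityOf {B U : Type*} [Fintype B] (w : B → U → ℝ) (Uk : Finset U) : ℝ :=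
  ∑ j ∈ Uk, ∑ i : B, w i j

def usageOf {B U : Type*} [Fintype U] (w : B → U → ℝ) (Bk : Finset B) : ℝ :=
  ∑ i ∈ Bk, ∑ j : U, w i j

/-- Internal weight of the cluster `C_k = B_k ∪ U_k` (each edge counted once). -/
def inWt {B U : Type*} (w : B → U → ℝ) (Bk : Finset B) (Uk : Finset U) : ℝ :=
  ∑ i ∈ Bk, ∑ j ∈ Uk, w i j

/-- Cut weight of the cluster `C_k = B_k ∪ U_k`. -/
def cutWt {B U : Type*} [Fintype B] [Fintype U] [DecidableEq B] [DecidableEq U]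
    (w : B → U → ℝ) (Bk : Finset B) (Uk : Finset U) : ℝ :=
  (∑ i ∈ Bk, ∑ j ∈ Ukᶜ, w i j) + ∑ i ∈ Bkᶜ, ∑ j ∈ Uk, w i j

/-- If `capacity(k) ≤ (1+ε)·usage(k)` and `c` is the largest ratio
`(∑_{j∈U} w i j)/(∑_{j∈U_k} w i j)` over `i ∈ B_k`, then
`w̄(C_k)/w(C_k) = (capacity(k)+usage(k))/w(C_k) − 2`, `usage(k)/w(C_k) ≤ c`, and
`w̄(C_k)/w(C_k) ≤ (2+ε)·c − 2`. -/
theorem stmt_10 {B U : Type*} [Fintype B] [Fintype U] [DecidableEq B] [DecidableEq U]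
    (w : B → U → ℝ) (hnn : ∀ i j, 0 ≤ w i j)
    (Bk : Finset B) (Uk : Finset U) (ε : ℝ) (hε : 0 < ε)
    (hwpos : 0 < inWt w Bk Uk)
    (hrowpos : ∀ i ∈ Bk, 0 < ∑ j ∈ Uk, w i j)
    (hcap : capacityOf w Uk ≤ (1 + ε) * usageOf w Bk)
    (c : ℝ)
    (hcub : ∀ i ∈ Bk, (∑ j : U, w i j) ≤ c * ∑ j ∈ Uk, w i j)
    (hcatt : ∃ i ∈ Bk, (∑ j : U, w i j) = c * ∑ j ∈ Uk, w i j) :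
    cutWt w Bk Uk / inWt w Bk Uk =
        (capacityOf w Uk + usageOf w Bk) / inWt w Bk Uk - 2 ∧
    usageOf w Bk / inWt w Bk Uk ≤ c ∧
    cutWt w Bk Uk / inWt w Bk Uk ≤ (2 + ε) * c - 2 := by
  have hin0 : inWt w Bk Uk ≠ 0 := ne_of_gt hwpos
  have hkey : capacityOf w Uk + usageOf w Bk = cutWt w Bk Uk + 2 * inWt w Bk Uk := by
    unfold capacityOf usageOf cutWt inWt
    rw [Finset.sum_comm]
    have h1 : ∑ i : B, ∑ j ∈ Uk, w i j
        = ∑ i ∈ Bk, ∑ j ∈ Uk, w i j + ∑ i ∈ Bkᶜ, ∑ j ∈ Uk, w i j :=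
      (Finset.sum_add_sum_compl Bk _).symm
    have h2 : ∑ i ∈ Bk, ∑ j : U, w i j
        = ∑ i ∈ Bk, ∑ j ∈ Uk, w i j + ∑ i ∈ Bk, ∑ j ∈ Ukᶜ, w i j := by
      rw [← Finset.sum_add_distrib]
      exact Finset.sum_congr rfl fun i _ => (Finset.sum_add_sum_compl Uk _).symm
    rw [h1, h2]; ring
  have hfirst : cutWt w Bk Uk / inWt w Bk Uk =
      (capacityOf w Uk + usageOf w Bk) / inWt w Bk Uk - 2 := by
    rw [hkey]; field_simp; ring
  have husage : usageOf w Bk ≤ c * inWt w Bk Uk := by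
    unfold usageOf inWt
    rw [Finset.mul_sum]
    exact Finset.sum_le_sum hcub
  have hsecond : usageOf w Bk / inWt w Bk Uk ≤ c := by
    rw [div_le_iff₀ hwpos]; linarith
  refine ⟨hfirst, hsecond, ?_⟩
  rw [hfirst]
  have h3 : capacityOf w Uk + usageOf w Bk ≤ (2 + ε) * c * inWt w Bk Uk := by
    nlinarith
  have : (capacityOf w Uk + usageOf w Bk) / inWt w Bk Uk ≤ (2 + ε) * c := by
    rw [div_le_iff₀ hwpos]; linarith
  linarith
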